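/- arXiv:2305.17793 — 2 statements merged into one kernel-verified Lean document; each statement's English description precedes it below -/
import Mathlib

section
/- Let f, g : ℂ → ℂ be nonconstant holomorphic maps and ψ : ℂ → ℂ a homeomorphism with f = g ∘ ψ. Then ψ is holomorphic; if moreover ψ is not injective it cannot be a homeomorphism, so ψ is a biholomorphism of ℂ, hence affine: ψ(z) = az + b with a ≠ 0. -/
/-!
Away from the critical points of `g`, `ψ` is a local inverse of `g` composed with `f`, hence
holomorphic; the critical points are isolated and `ψ` is continuous and injective, so Riemann's
removable singularity theorem makes `ψ` entire. The same argument applied to `ψ ∘ ψ⁻¹ = id` makes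
`ψ⁻¹` entire. A homeomorphism of `ℂ` tends to `∞` at `∞`, so `z ↦ 1 / ψ (1 / z)` has a removable
zero at `0`: `ψ` grows at most like a power of `z`, and Cauchy's estimates make it a polynomial.
Then `ψ` and `ψ⁻¹` are polynomials whose composition is `X`, so both have degree one.
-/

open Filter Topology Set Function Polynomial Asymptotics Bornology
open scoped Nat

theorem differentiableAt_of_eventuallyEq_comp {𝕜 : Type*} [NontriviallyNormedField 𝕜]
    [CompleteSpace 𝕜] {f g ψ : 𝕜 → 𝕜} {g' z₀ : 𝕜} (hf : DifferentiableAt 𝕜 f z₀)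
    (hg : HasStrictDerivAt g g' (ψ z₀)) (hg' : g' ≠ 0) (hψ : ContinuousAt ψ z₀)
    (hcomp : ∀ᶠ z in 𝓝 z₀, f z = g (ψ z)) : DifferentiableAt 𝕜 ψ z₀ := by
  have hψ_eq : ψ =ᶠ[𝓝 z₀] hg.localInverse g g' (ψ z₀) hg' ∘ f := by
    filter_upwards [hψ.eventually (hg.hasStrictFDerivAt_equiv hg').eventually_left_inverse,
      hcomp] with z hz hfz
    rw [comp_apply, hfz]
    exact hz.symm
  have hinv : DifferentiableAt 𝕜 (hg.localInverse g g' (ψ z₀) hg') (f z₀) := by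
    rw [hcomp.self_of_nhds]
    exact (hg.to_localInverse hg').hasDerivAt.differentiableAt
  exact (hinv.comp z₀ hf).congr_of_eventuallyEq hψ_eq

theorem eventually_deriv_ne_zero_nhdsNE {g : ℂ → ℂ} (hg : Differentiable ℂ g)
    (hgc : ∃ z w, g z ≠ g w) (w : ℂ) : ∀ᶠ u in 𝓝[≠] w, deriv g u ≠ 0 := by
  have hA : AnalyticOnNhd ℂ (deriv g) univ := fun u _ ↦ (hg.analyticAt u).deriv
  refine (hA w trivial).eventually_eq_zero_or_eventually_ne_zero.resolve_left fun h ↦ ?_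
  obtain ⟨z₁, z₂, hne⟩ := hgc
  exact hne (is_const_of_deriv_eq_zero hg (fun u ↦
    hA.eqOn_zero_of_preconnected_of_eventuallyEq_zero isPreconnected_univ trivial h trivial) z₁ z₂)

theorem differentiable_of_eq_comp {f g ψ : ℂ → ℂ} (hf : Differentiable ℂ f)
    (hg : Differentiable ℂ g) (hgc : ∃ z w, g z ≠ g w) (hψ : Continuous ψ)
    (hψ_inj : Injective ψ) (hcomp : ∀ z, f z = g (ψ z)) : Differentiable ℂ ψ := by
  have hregular : ∀ z, deriv g (ψ z) ≠ 0 → DifferentiableAt ℂ ψ z := fun z hz ↦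
    differentiableAt_of_eventuallyEq_comp (hf z) (hg.analyticAt _).hasStrictDerivAt hz
      hψ.continuousAt (.of_forall hcomp)
  intro z₀
  rcases ne_or_eq (deriv g (ψ z₀)) 0 with hz₀ | -
  · exact hregular z₀ hz₀
  have hpunct : Tendsto ψ (𝓝[≠] z₀) (𝓝[≠] (ψ z₀)) :=
    tendsto_nhdsWithin_of_tendsto_nhds_of_eventually_within _
      (hψ.continuousAt.mono_left nhdsWithin_le_nhds)
      (eventually_nhdsWithin_of_forall fun _ hz ↦ hψ_inj.ne hz)
  exact (Complex.analyticAt_of_differentiable_on_punctured_nhds_of_continuousAt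
    ((hpunct.eventually (eventually_deriv_ne_zero_nhdsNE hg hgc _)).mono hregular)
    hψ.continuousAt).differentiableAt

theorem iteratedDeriv_eq_zero_of_isBigO_pow {E : Type*} [NormedAddCommGroup E] [NormedSpace ℂ E]
    [CompleteSpace E] {f : ℂ → E} {n k : ℕ} (hf : Differentiable ℂ f)
    (hO : f =O[cobounded ℂ] (· ^ n)) (hk : n < k) : iteratedDeriv k f 0 = 0 := by
  obtain ⟨C, hC⟩ := hO.bound
  obtain ⟨R, -, hR⟩ := hasBasis_cobounded_norm.eventually_iff.1 hC
  have hcauchy : ∀ᶠ r in atTop, ‖iteratedDeriv k f 0‖ ≤ k ! * C * (r ^ n / r ^ k) := by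
    filter_upwards [eventually_ge_atTop R, eventually_gt_atTop 0] with r hRr hr
    have hsphere : ∀ z ∈ Metric.sphere (0 : ℂ) r, ‖f z‖ ≤ C * r ^ n := fun z hz ↦ by
      rw [mem_sphere_zero_iff_norm] at hz
      have hz_bound := hR (show R ≤ ‖z‖ from hz ▸ hRr)
      rwa [norm_pow, hz] at hz_bound
    calc ‖iteratedDeriv k f 0‖ ≤ k ! * (C * r ^ n) / r ^ k :=
          Complex.norm_iteratedDeriv_le_of_forall_mem_sphere_norm_le k hr hf.diffContOnCl hsphere
      _ = k ! * C * (r ^ n / r ^ k) := by ring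
  have hlim : Tendsto (fun r : ℝ ↦ k ! * C * (r ^ n / r ^ k)) atTop (𝓝 0) := by
    simpa using (tendsto_pow_div_pow_atTop_zero hk).const_mul ((k ! : ℝ) * C)
  exact norm_le_zero_iff.1 (ge_of_tendsto hlim hcauchy)

theorem exists_polynomial_of_isBigO_pow {f : ℂ → ℂ} {n : ℕ} (hf : Differentiable ℂ f)
    (hO : f =O[cobounded ℂ] (· ^ n)) : ∃ p : ℂ[X], ∀ z, f z = p.eval z := by
  refine ⟨∑ k ∈ Finset.range (n + 1), C ((k ! : ℂ)⁻¹ * iteratedDeriv k f 0) * X ^ k, fun z ↦ ?_⟩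
  have htail : ∀ k ∉ Finset.range (n + 1), (k ! : ℂ)⁻¹ • (z - 0) ^ k • iteratedDeriv k f 0 = 0 :=
    fun k hk ↦ by simp [iteratedDeriv_eq_zero_of_isBigO_pow hf hO (by simpa using hk)]
  rw [(Complex.hasSum_taylorSeries_of_entire hf 0 z).unique (hasSum_sum_of_ne_finset_zero htail)]
  simp [eval_finsetSum, mul_comm, mul_left_comm]

theorem isBigO_pow_of_tendsto_cobounded {f : ℂ → ℂ} (hf : Differentiable ℂ f)
    (hf_proper : Tendsto f (cobounded ℂ) (cobounded ℂ)) : ∃ n : ℕ, f =O[cobounded ℂ] (· ^ n) := by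
  have hf_inv : Tendsto (fun z ↦ f z⁻¹) (𝓝[≠] 0) (cobounded ℂ) :=
    hf_proper.comp tendsto_inv₀_nhdsNE_zero
  -- `z ↦ 1 / f (1 / z)`, with the junk value `(f 0)⁻¹` at `0` replaced by its limit
  set u : ℂ → ℂ := update (fun z ↦ (f z⁻¹)⁻¹) 0 0
  have hu_ne : ∀ᶠ z in 𝓝[≠] 0, u z ≠ 0 := by
    filter_upwards [hf_inv.eventually (eventually_ne_cobounded 0), self_mem_nhdsWithin]
      with z hz hz0
    simpa [u, update_of_ne hz0] using hz
  have hu : AnalyticAt ℂ u 0 := by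
    refine Complex.analyticAt_of_differentiable_on_punctured_nhds_of_continuousAt ?_
      (continuousAt_update_same.2 (tendsto_inv₀_cobounded.comp hf_inv))
    filter_upwards [hf_inv.eventually (eventually_ne_cobounded 0), self_mem_nhdsWithin]
      with z hz hz0
    refine (((hf _).comp z (differentiableAt_inv hz0)).inv hz).congr_of_eventuallyEq ?_
    filter_upwards [eventually_ne_nhds hz0] with w hw
    exact update_of_ne hw _ _
  obtain ⟨n, v, hv, hv0, huv⟩ := hu.exists_eventuallyEq_pow_smul_nonzero_iff.2 fun h ↦
    ((h.filter_mono nhdsWithin_le_nhds).and hu_ne).exists.elim fun _ h ↦ h.2 h.1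
  have hf_eq : f =ᶠ[cobounded ℂ] fun w ↦ w ^ n * (v w⁻¹)⁻¹ := by
    filter_upwards [tendsto_inv₀_cobounded'.eventually (huv.filter_mono nhdsWithin_le_nhds),
      tendsto_inv₀_cobounded'.eventually self_mem_nhdsWithin] with w hw hw0
    simp only [u, update_of_ne hw0, inv_inv, sub_zero, smul_eq_mul] at hw
    rw [← inv_inv (f w), hw, mul_inv, inv_pow, inv_inv]
  have hv_bdd : (fun w ↦ (v w⁻¹)⁻¹) =O[cobounded ℂ] fun _ ↦ (1 : ℂ) :=
    ((hv.continuousAt.tendsto.comp tendsto_inv₀_cobounded).inv₀ hv0).isBigO_one ℂ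
  exact ⟨n, hf_eq.trans_isBigO (by simpa using (isBigO_refl (· ^ n) _).mul hv_bdd)⟩

theorem exists_polynomial_of_tendsto_cobounded {f : ℂ → ℂ} (hf : Differentiable ℂ f)
    (hf_proper : Tendsto f (cobounded ℂ) (cobounded ℂ)) : ∃ p : ℂ[X], ∀ z, f z = p.eval z :=
  (isBigO_pow_of_tendsto_cobounded hf hf_proper).elim fun _ ↦ exists_polynomial_of_isBigO_pow hf

theorem Homeomorph.tendsto_cobounded {α β : Type*} [PseudoMetricSpace α] [ProperSpace α]
    [PseudoMetricSpace β] [ProperSpace β] (e : α ≃ₜ β) : Tendsto e (cobounded α) (cobounded β) := by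
  rw [Metric.cobounded_eq_cocompact, Metric.cobounded_eq_cocompact]
  exact e.map_cocompact.le

theorem Polynomial.exists_eval_eq_mul_add_of_comp_eq_X {K : Type*} [Field K] {p q : K[X]}
    (h : p.comp q = X) : ∃ a b : K, a ≠ 0 ∧ ∀ z, p.eval z = a * z + b := by
  have hdeg : p.natDegree = 1 :=
    Nat.eq_one_of_mul_eq_one_right (by rw [← natDegree_comp, h, natDegree_X])
  refine ⟨p.coeff 1, p.coeff 0, ?_, fun z ↦ ?_⟩
  · rw [← hdeg]
    exact leadingCoeff_ne_zero.2 (ne_zero_of_natDegree_gt (hdeg ▸ zero_lt_one))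
  · conv_lhs => rw [eq_X_add_C_of_natDegree_le_one hdeg.le]
    simp

theorem conjugacy_is_affine_general (f g : ℂ → ℂ) (hf : Differentiable ℂ f) (hg : Differentiable ℂ g)
    (hgc : ∃ z w : ℂ, g z ≠ g w)
    (ψ : ℂ → ℂ) (hψ : IsHomeomorph ψ) (hcomp : ∀ z : ℂ, f z = g (ψ z)) :
    ∃ a b : ℂ, a ≠ 0 ∧ ∀ z : ℂ, ψ z = a * z + b := by
  set e := hψ.homeomorph ψ
  have hψ_diff : Differentiable ℂ ψ :=
    differentiable_of_eq_comp hf hg hgc hψ.continuous hψ.injective hcomp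
  have hψ_inv_diff : Differentiable ℂ e.symm :=
    differentiable_of_eq_comp differentiable_id hψ_diff ⟨0, 1, hψ.injective.ne zero_ne_one⟩
      e.symm.continuous e.symm.injective fun z ↦ (e.apply_symm_apply z).symm
  obtain ⟨p, hp⟩ := exists_polynomial_of_tendsto_cobounded hψ_diff e.tendsto_cobounded
  obtain ⟨q, hq⟩ := exists_polynomial_of_tendsto_cobounded hψ_inv_diff e.symm.tendsto_cobounded
  have hpq : p.comp q = X := Polynomial.funext fun z ↦ by
    rw [eval_comp, ← hq, ← hp, eval_X]
    exact e.apply_symm_apply z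
  simpa only [← hp] using exists_eval_eq_mul_add_of_comp_eq_X hpq

/-- If `f` and `g` are nonconstant entire functions and `ψ` is a homeomorphism of `ℂ` with
`f = g ∘ ψ`, then `ψ` is affine: `ψ z = a z + b` with `a ≠ 0` (in particular holomorphic). -/
theorem conjugacy_is_affine (f g : ℂ → ℂ) (hf : Differentiable ℂ f) (hg : Differentiable ℂ g)
    (hfc : ∃ z w : ℂ, f z ≠ f w) (hgc : ∃ z w : ℂ, g z ≠ g w)
    (ψ : ℂ → ℂ) (hψ : IsHomeomorph ψ) (hcomp : ∀ z : ℂ, f z = g (ψ z)) :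
    ∃ a b : ℂ, a ≠ 0 ∧ ∀ z : ℂ, ψ z = a * z + b :=
  conjugacy_is_affine_general f g hf hg hgc ψ hψ hcomp
end

section
/- Let A ⊂ ℝ² be a finite set and let φ : ℝ² → ℝ² be a homeomorphism such that there exists a path p in ℝ² \ A from a point b to φ(b) with the property: for every loop γ in ℝ² \ A based at b, γ is path-homotopic in ℝ² \ A to the concatenation p · (φ ∘ γ) · p̄. Then φ(a) = a for every a ∈ A. -/
/-!
Suppose `φ a ≠ a` for some `a ∈ A`. Take a small circle `c` around `a` whose closed disk misses
`A \ {a}` and `φ⁻¹ a`, and conjugate it by a path `q` in `ℂ \ A` into a loop `γ = q · c · q̄` at `b`.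
The homotopy given by the hypothesis lives in `ℂ \ {a}`. There `φ ∘ c` is null-homotopic, since
it is the image of a loop in the disk and `φ` maps the disk into `ℂ \ {a}`; hence so are `φ ∘ γ`
and `p · (φ ∘ γ) · p̄`. But `c`, and with it `γ`, is not null-homotopic in `ℂ \ {a}`: its lift
along the covering map `z ↦ a + exp z` of `ℂ \ {a}` is not closed.
-/

open Set Complex
open scoped Real

namespace Path

variable {Y : Type*} [TopologicalSpace Y] {s : Set Y} {x y z : Y}

def codRestrict (γ : Path x y) (h : range γ ⊆ s) :
    Path (⟨x, h ⟨0, γ.source⟩⟩ : s) ⟨y, h ⟨1, γ.target⟩⟩ where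
  toFun t := ⟨γ t, h ⟨t, rfl⟩⟩
  continuous_toFun := γ.continuous.subtype_mk _
  source' := Subtype.ext γ.source
  target' := Subtype.ext γ.target

@[simp]
theorem coe_codRestrict_apply (γ : Path x y) (h : range γ ⊆ s) (t : unitInterval) :
    (γ.codRestrict h t : Y) = γ t :=
  rfl

@[simp]
theorem codRestrict_symm (γ : Path x y) (h : range γ.symm ⊆ s) :
    γ.symm.codRestrict h = (γ.codRestrict (γ.symm_range ▸ h)).symm :=
  rfl

@[simp]
theorem codRestrict_trans (γ : Path x y) (δ : Path y z) (h : range (γ.trans δ) ⊆ s) :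
    (γ.trans δ).codRestrict h =
      (γ.codRestrict ((γ.trans_range δ ▸ h).trans' subset_union_left)).trans
        (δ.codRestrict ((γ.trans_range δ ▸ h).trans' subset_union_right)) := by
  ext t
  simp only [coe_codRestrict_apply, trans_apply]
  split_ifs <;> rfl

theorem Homotopy.homotopic_codRestrict {γ₀ γ₁ : Path x y} (F : γ₀.Homotopy γ₁)
    (hF : range F ⊆ s) (h₀ : range γ₀ ⊆ s) (h₁ : range γ₁ ⊆ s) :
    (γ₀.codRestrict h₀).Homotopic (γ₁.codRestrict h₁) :=
  ⟨{ toFun q := ⟨F q, hF ⟨q, rfl⟩⟩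
     continuous_toFun := F.continuous.subtype_mk _
     map_zero_left t := Subtype.ext (F.apply_zero t)
     map_one_left t := Subtype.ext (F.apply_one t)
     prop' t u hu := Subtype.ext (F.prop' t u hu) }⟩

theorem homotopic_refl_iff_conj (P : Path x y) (C : Path y y) :
    C.Homotopic (refl y) ↔ (P.trans (C.trans P.symm)).Homotopic (refl x) := by
  simp only [← Homotopic.Quotient.eq, Homotopic.Quotient.mk_trans, Homotopic.Quotient.mk_symm,
    Homotopic.Quotient.mk_refl]
  set p := Homotopic.Quotient.mk P
  refine ⟨fun h ↦ by simp [h], fun h ↦ ?_⟩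
  calc Homotopic.Quotient.mk C
      = (p.symm.trans (p.trans (Homotopic.Quotient.mk C |>.trans p.symm))).trans p := by
        simp [← Homotopic.Quotient.trans_assoc, Homotopic.Quotient.trans_assoc _ p.symm]
    _ = _ := by rw [h]; simp

theorem homotopic_refl_codRestrict_map_of_isSimplyConnected {E : Type*} [TopologicalSpace E]
    {D : Set E} (hD : IsSimplyConnected D) {e : E} (γ : Path e e) (hγ : range γ ⊆ D)
    {f : E → Y} (hf : Continuous f) (hfD : MapsTo f D s) :
    ((γ.map hf).codRestrict (range_subset_iff.2 fun t ↦ hfD (hγ ⟨t, rfl⟩))).Homotopic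
      (refl _) := by
  have := hD.simplyConnectedSpace
  let g : C(D, s) := ⟨fun w ↦ ⟨f w, hfD w.2⟩, (hf.comp continuous_subtype_val).subtype_mk _⟩
  exact (SimplyConnectedSpace.paths_homotopic (γ.codRestrict hγ) (refl _)).map g

end Path

theorem IsCoveringMap.not_homotopic_refl_of_lift {E X : Type*} [TopologicalSpace E]
    [TopologicalSpace X] {p : E → X} (cov : IsCoveringMap p) {x : X} (γ : Path x x)
    (Γ : C(unitInterval, E)) (hΓ : ∀ t, p (Γ t) = γ t) (hne : Γ 1 ≠ Γ 0) :
    ¬ γ.Homotopic (Path.refl x) := by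
  intro h
  have hγ0 : γ.toContinuousMap 0 = p (Γ 0) := by simp [hΓ]
  have hx : x = p (Γ 0) := by simp [hΓ]
  have key := cov.liftPath_apply_one_eq_of_homotopicRel h (Γ 0) hγ0 hx
  rw [← (cov.eq_liftPath_iff' hγ0).2 ⟨funext hΓ, rfl⟩] at key
  exact hne (key.trans (congrArg (· 1) (cov.liftPath_const hx)))

theorem isCoveringMap_add_exp (a : ℂ) :
    IsCoveringMap fun z : ℂ ↦ (⟨a + exp z, by simp [exp_ne_zero]⟩ : ({a}ᶜ : Set ℂ)) :=
  isCoveringMap_exp.homeomorph_comp ((Homeomorph.addLeft a).subtype fun w ↦ by simp)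

/-- The circle of radius `exp ρ` about `a`, parametrized so that `t ↦ ρ + 2πit` lifts it along
`z ↦ a + exp z`. -/
noncomputable def circleLoop (a : ℂ) (ρ : ℝ) : Path (a + exp ρ) (a + exp ρ) where
  toFun t := a + exp ((ρ : ℂ) + 2 * π * I * (t : ℝ))
  continuous_toFun := by fun_prop
  source' := by simp
  target' := by simp [exp_add]

theorem circleLoop_mem_sphere (a : ℂ) (ρ : ℝ) (t : unitInterval) :
    circleLoop a ρ t ∈ Metric.sphere a (Real.exp ρ) := by
  simp [circleLoop, norm_exp]

theorem circleLoop_not_homotopic_refl (a : ℂ) (ρ : ℝ) (h : range (circleLoop a ρ) ⊆ {a}ᶜ) :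
    ¬ ((circleLoop a ρ).codRestrict h).Homotopic (Path.refl _) :=
  (isCoveringMap_add_exp a).not_homotopic_refl_of_lift _
    ⟨fun t ↦ ρ + 2 * π * I * (t : ℝ), by fun_prop⟩ (fun _ ↦ rfl) (by simp [Real.pi_ne_zero])

theorem center_mem_range_of_homotopy_circleLoop_conj_map {a b : ℂ} {ρ : ℝ} {f : ℂ → ℂ}
    (hf : Continuous f) (hfD : MapsTo f (Metric.closedBall a (Real.exp ρ)) {a}ᶜ)
    (p : Path b (f b)) (q : Path b (a + exp ρ))
    (H : (q.trans ((circleLoop a ρ).trans q.symm)).Homotopy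
      ((p.trans ((q.trans ((circleLoop a ρ).trans q.symm)).map hf)).trans p.symm)) :
    a ∈ range H := by
  revert H
  rw [Path.map_trans, Path.map_trans, ← Path.map_symm]
  intro H
  by_contra ha
  have hH : range H ⊆ {a}ᶜ := fun _ hw hwa ↦ ha (hwa ▸ hw)
  have hom := H.homotopic_codRestrict hH
    (range_subset_iff.2 fun t ↦ H.apply_zero t ▸ hH (mem_range_self _))
    (range_subset_iff.2 fun t ↦ H.apply_one t ▸ hH (mem_range_self _))
  simp only [Path.codRestrict_trans, Path.codRestrict_symm] at hom
  have hD : IsSimplyConnected (Metric.closedBall a (Real.exp ρ)) :=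
    have := (convex_closedBall a _).contractibleSpace
      ⟨a, Metric.mem_closedBall_self (Real.exp_pos ρ).le⟩
    SimplyConnectedSpace.ofContractible _
  have hc : range (circleLoop a ρ) ⊆ Metric.closedBall a (Real.exp ρ) :=
    range_subset_iff.2 fun t ↦ Metric.sphere_subset_closedBall (circleLoop_mem_sphere a ρ t)
  have hfc := Path.homotopic_refl_codRestrict_map_of_isSimplyConnected hD _ hc hf hfD
  refine circleLoop_not_homotopic_refl a ρ _ ((Path.homotopic_refl_iff_conj _ _).2 (hom.trans ?_))
  exact (Path.Homotopic.trans_assoc _ _ _).trans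
    ((Path.homotopic_refl_iff_conj _ _).1 ((Path.homotopic_refl_iff_conj _ _).1 hfc))

theorem fixes_marked_points_of_loop_condition_general (A : Set ℂ) (hA : A.Finite)
    (φ : ℂ ≃ₜ ℂ) (b : ℂ) (hb : b ∉ A)
    (p : Path b (φ b))
    (hloops : ∀ γ : Path b b, (∀ t, γ t ∉ A) →
      ∃ H : γ.Homotopy ((p.trans (γ.map φ.continuous)).trans p.symm),
        ∀ x : unitInterval × unitInterval, H x ∉ A) :
    ∀ a ∈ A, φ a = a := by
  intro a ha
  by_contra hφa
  have haS : a ∉ insert (φ.symm a) (A \ {a}) := by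
    rintro (h | ⟨-, h⟩)
    exacts [hφa (φ.eq_symm_apply.1 h), h rfl]
  obtain ⟨r, hr, hball⟩ := Metric.nhds_basis_closedBall.mem_iff.1
    ((hA.sdiff.insert _).isClosed.isOpen_compl.mem_nhds haS)
  obtain ⟨ρ, rfl⟩ : ∃ ρ, Real.exp ρ = r := ⟨_, Real.exp_log hr⟩
  have hφD : MapsTo φ (Metric.closedBall a (Real.exp ρ)) {a}ᶜ :=
    fun w hw hφw ↦ hball hw (.inl (φ.eq_symm_apply.2 hφw))
  have hcA : range (circleLoop a ρ) ⊆ Aᶜ := by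
    rintro _ ⟨t, rfl⟩ hcA
    have hct := circleLoop_mem_sphere a ρ t
    exact hball (Metric.sphere_subset_closedBall hct)
      (.inr ⟨hcA, Metric.ne_of_mem_sphere hct (Real.exp_pos _).ne'⟩)
  obtain ⟨q, hq⟩ : ∃ q : Path b (a + exp ρ), range q ⊆ Aᶜ :=
    have hJ := (hA.countable.isPathConnected_compl_of_one_lt_rank
      (rank_real_complex ▸ Nat.one_lt_ofNat)).joinedIn b hb _ (hcA ⟨0, Path.source _⟩)
    ⟨hJ.somePath, range_subset_iff.2 hJ.somePath_mem⟩
  have hγA : range (q.trans ((circleLoop a ρ).trans q.symm)) ⊆ Aᶜ := by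
    simp only [Path.trans_range, Path.symm_range]
    exact union_subset hq (union_subset hcA hq)
  obtain ⟨H, hH⟩ := hloops _ fun t ↦ hγA ⟨t, rfl⟩
  obtain ⟨x, hx⟩ := center_mem_range_of_homotopy_circleLoop_conj_map φ.continuous hφD p q H
  exact hH x (hx.symm ▸ ha)

/-- Let `A ⊆ ℂ ≅ ℝ²` be finite, `φ` a homeomorphism of the plane, `b ∉ A`, and `p` a path in the
complement of `A` from `b` to `φ b` such that every loop `γ` in the complement of `A` based at
`b` is path-homotopic in the complement of `A` to the concatenation `p · (φ ∘ γ) · p̄`. Then `φ`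
fixes every point of `A`. -/
theorem fixes_marked_points_of_loop_condition (A : Set ℂ) (hA : A.Finite)
    (φ : ℂ ≃ₜ ℂ) (b : ℂ) (hb : b ∉ A)
    (p : Path b (φ b)) (hp : ∀ t, p t ∉ A)
    (hloops : ∀ γ : Path b b, (∀ t, γ t ∉ A) →
      ∃ H : γ.Homotopy ((p.trans (γ.map φ.continuous)).trans p.symm),
        ∀ x : unitInterval × unitInterval, H x ∉ A) :
    ∀ a ∈ A, φ a = a :=
  fixes_marked_points_of_loop_condition_general A hA φ b hb p hloops
end
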